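/- Suppose at step k of the DFP method that s_k ≠ 0, τ_k < 1, and ‖B̂_k − I‖_F ≤ δ for some δ > 0. Then the DFP update satisfies ‖B̂_{k+1} − I‖_F ≤ ‖B̂_k − I‖_F − ‖(B̂_k − I)ŝ_k‖²/(2δ‖ŝ_k‖²) + W_k·τ_k, where W_k = ‖B̂_k‖·4/(1 − τ_k) + ‖B̂_k‖·4τ_k/(1 − τ_k)² + (3 + τ_k)/(1 − τ_k). -/

import Mathlib

noncomputable section

open Matrix Finset

abbrev E (d : ℕ) := EuclideanSpace ℝ (Fin d)
abbrev Mat (d : ℕ) := Matrix (Fin d) (Fin d) ℝ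

/-- Spectral (operator 2-) norm of a real matrix. -/
def spec {d : ℕ} (A : Mat d) : ℝ := ‖Matrix.toEuclideanCLM (𝕜 := ℝ) A‖

/-- Frobenius norm of a real matrix. -/
def frob {d : ℕ} (A : Mat d) : ℝ := Real.sqrt (∑ i, ∑ j, (A i j) ^ 2)

/-- A matrix acting on a Euclidean vector. -/
def mApp {d : ℕ} (A : Mat d) (v : E d) : E d := Matrix.toEuclideanCLM (𝕜 := ℝ) A v

/-- Outer product `u vᵀ`. -/
def outer {d : ℕ} (u v : E d) : Mat d := Matrix.of fun i j => u i * v j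

/-- Euclidean dot product. -/
def dot {d : ℕ} (u v : E d) : ℝ := ∑ i, u i * v i

/-- `σ(x) = (M/μ^{3/2})·‖H_*^{1/2}(x − x_*)‖`. -/
def sig {d : ℕ} (M μ : ℝ) (sqH : Mat d) (xs x : E d) : ℝ :=
  M / μ ^ ((3:ℝ)/2) * ‖mApp sqH (x - xs)‖

/-- `τ = max{σ(x), σ(x')}`. -/
def tauP {d : ℕ} (M μ : ℝ) (sqH : Mat d) (xs x x' : E d) : ℝ :=
  max (sig M μ sqH xs x) (sig M μ sqH xs x')

/-- The DFP update of the Hessian approximation. -/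
def dfpUpdate {d : ℕ} (B : Mat d) (s y : E d) : Mat d :=
  (1 - (dot y s)⁻¹ • outer y s) * B * (1 - (dot s y)⁻¹ • outer s y)
    + (dot y s)⁻¹ • outer y y

/-! In the coordinates `B̂ = H_*^{-1/2} B H_*^{-1/2}`, `ŝ = H_*^{1/2} s`, `ŷ = H_*^{-1/2} y` the DFP
update keeps its form, and the mean value inequality with the Hessian Lipschitz bound gives
`‖ŷ - ŝ‖ ≤ τ ‖ŝ‖`. With `p = ŝ / ‖ŝ‖²` and `q = ŷ / ⟨ŷ, ŝ⟩`, the error `B̂⁺ - I` is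
`Π (B̂ - I) Π`, where `Π` projects onto `ŝᗮ`, plus rank-one terms of size `O(‖p - q‖ ‖ŝ‖) = O(τ)`.
Projecting on the right removes `‖(B̂ - I) ŝ‖² / ‖ŝ‖²` from `‖B̂ - I‖_F²`, which, as
`‖B̂ - I‖_F ≤ δ`, lowers `‖B̂ - I‖_F` itself by at least `‖(B̂ - I) ŝ‖² / (2δ ‖ŝ‖²)`; projecting on
the left does not increase the norm. -/

section Euclidean

variable {d : ℕ}

lemma mApp_apply (A : Mat d) (v : E d) (i : Fin d) : mApp A v i = ∑ j, A i j * v j := by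
  simp [mApp, Matrix.ofLp_toEuclideanCLM, Matrix.mulVec, dotProduct]

lemma mApp_mul (A B : Mat d) (v : E d) : mApp (A * B) v = mApp A (mApp B v) := by
  simp [mApp, _root_.map_mul]

lemma mApp_one (v : E d) : mApp 1 v = v := by simp [mApp]

lemma mApp_sub (A : Mat d) (u v : E d) : mApp A (u - v) = mApp A u - mApp A v :=
  map_sub _ u v

lemma mApp_inv_mApp {P : Mat d} (hP : P⁻¹ * P = 1) (v : E d) : mApp P⁻¹ (mApp P v) = v := by
  rw [← mApp_mul, hP, mApp_one]

lemma dot_eq_inner (u v : E d) : dot u v = inner ℝ u v := by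
  simp [dot, PiLp.inner_apply, mul_comm]

lemma dot_comm (u v : E d) : dot u v = dot v u := by simp only [dot, mul_comm]

lemma dot_self (v : E d) : dot v v = ‖v‖ ^ 2 := by
  rw [dot_eq_inner, real_inner_self_eq_norm_sq]

lemma dot_sub_left (u v w : E d) : dot (u - v) w = dot u w - dot v w := by
  simp only [dot_eq_inner, inner_sub_left]

lemma abs_dot_le (u v : E d) : |dot u v| ≤ ‖u‖ * ‖v‖ := by
  rw [dot_eq_inner]; exact abs_real_inner_le_norm u v

lemma dot_mApp_left (A : Mat d) (u v : E d) : dot (mApp A u) v = dot u (mApp Aᵀ v) := by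
  simp only [dot, mApp_apply, Finset.sum_mul, Finset.mul_sum, transpose_apply]
  rw [Finset.sum_comm]
  exact Finset.sum_congr rfl fun i _ => Finset.sum_congr rfl fun j _ => by ring

lemma norm_mApp_le_spec (A : Mat d) (v : E d) : ‖mApp A v‖ ≤ spec A * ‖v‖ :=
  (toEuclideanCLM (𝕜 := ℝ) A).le_opNorm v

lemma spec_nonneg (A : Mat d) : 0 ≤ spec A := norm_nonneg _

lemma transpose_outer (u v : E d) : (outer u v)ᵀ = outer v u := by
  ext i j; simp [outer, mul_comm]

lemma mul_outer (A : Mat d) (u v : E d) : A * outer u v = outer (mApp A u) v := by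
  ext i j
  simp [Matrix.mul_apply, outer, mApp_apply, Finset.sum_mul, mul_assoc]

lemma outer_mul (u v : E d) (A : Mat d) : outer u v * A = outer u (mApp Aᵀ v) := by
  rw [← transpose_transpose (outer u v * A), transpose_mul, transpose_outer, mul_outer,
    transpose_outer]

lemma mApp_outer (u v w : E d) : mApp (outer u v) w = dot v w • u := by
  ext i
  rw [mApp_apply, PiLp.smul_apply, smul_eq_mul, dot, Finset.sum_mul]
  exact Finset.sum_congr rfl fun k _ => by simp [outer]; ring

lemma outer_smul_left (t : ℝ) (u v : E d) : outer (t • u) v = t • outer u v := by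
  ext i j; simp [outer, mul_assoc]

lemma outer_smul_right (t : ℝ) (u v : E d) : outer u (t • v) = t • outer u v := by
  ext i j; simp [outer]; ring

end Euclidean

section Frobenius

attribute [local instance] Matrix.frobeniusNormedAddCommGroup Matrix.frobeniusNormSMulClass

variable {d : ℕ}

lemma frob_eq_norm (A : Mat d) : frob A = ‖A‖ := by
  rw [frob, frobenius_norm_def, ← Real.sqrt_eq_rpow]
  congr 1
  simp [sq_abs]

lemma frob_nonneg (A : Mat d) : 0 ≤ frob A := Real.sqrt_nonneg _

lemma frob_sq (A : Mat d) : frob A ^ 2 = ∑ i, ∑ j, A i j ^ 2 :=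
  Real.sq_sqrt (by positivity)

lemma frob_add_le (A B : Mat d) : frob (A + B) ≤ frob A + frob B := by
  simp only [frob_eq_norm]; exact norm_add_le A B

lemma frob_smul (t : ℝ) (A : Mat d) : frob (t • A) = |t| * frob A := by
  simp only [frob_eq_norm, norm_smul, Real.norm_eq_abs]

lemma frob_transpose (A : Mat d) : frob Aᵀ = frob A := by
  simp only [frob_eq_norm, frobenius_norm_transpose]

lemma frob_outer (u v : E d) : frob (outer u v) = ‖u‖ * ‖v‖ := by
  rw [frob, ← Real.sqrt_sq (norm_nonneg u), ← Real.sqrt_sq (norm_nonneg v), ← Real.sqrt_mul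
    (sq_nonneg _), ← dot_self, ← dot_self, dot, dot, Finset.sum_mul_sum]
  simp only [outer, of_apply, sq]
  exact congrArg _ (Finset.sum_congr rfl fun i _ => Finset.sum_congr rfl fun j _ => by ring)

end Frobenius

section Projection

variable {d : ℕ}

def orthProj (s : E d) : Mat d := 1 - (‖s‖ ^ 2)⁻¹ • outer s s

lemma transpose_orthProj (s : E d) : (orthProj s)ᵀ = orthProj s := by
  rw [orthProj, transpose_sub, transpose_one, transpose_smul, transpose_outer]

lemma mul_orthProj (A : Mat d) (s : E d) :
    A * orthProj s = A - (‖s‖ ^ 2)⁻¹ • outer (mApp A s) s := by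
  rw [orthProj, mul_sub, mul_one, mul_smul_comm, mul_outer]

lemma frob_mul_orthProj_sq (A : Mat d) {s : E d} (hs : s ≠ 0) :
    frob (A * orthProj s) ^ 2 = frob A ^ 2 - ‖mApp A s‖ ^ 2 / ‖s‖ ^ 2 := by
  have hs2 : ‖s‖ ^ 2 ≠ 0 := by positivity
  have hrow : ∀ i, ∑ j, (A i j - (‖s‖ ^ 2)⁻¹ * (mApp A s i * s j)) ^ 2
      = ∑ j, A i j ^ 2 - mApp A s i ^ 2 / ‖s‖ ^ 2 := by
    intro i
    set b := mApp A s i with hb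
    have expand : ∀ j, (A i j - (‖s‖ ^ 2)⁻¹ * (b * s j)) ^ 2 = A i j ^ 2
        - (2 * (‖s‖ ^ 2)⁻¹ * b) * (A i j * s j) + ((‖s‖ ^ 2)⁻¹ ^ 2 * b ^ 2) * s j ^ 2 :=
      fun j => by ring
    rw [Finset.sum_congr rfl fun j _ => expand j, Finset.sum_add_distrib, Finset.sum_sub_distrib,
      ← Finset.mul_sum, ← Finset.mul_sum, ← EuclideanSpace.real_norm_sq_eq, hb, mApp_apply]
    field_simp
    ring
  rw [mul_orthProj, frob_sq, frob_sq, EuclideanSpace.real_norm_sq_eq (mApp A s), Finset.sum_div,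
    ← Finset.sum_sub_distrib]
  simp only [Matrix.sub_apply, Matrix.smul_apply, outer, of_apply, smul_eq_mul, hrow]

lemma frob_mul_orthProj_le (A : Mat d) {s : E d} (hs : s ≠ 0) : frob (A * orthProj s) ≤ frob A := by
  refine le_of_pow_le_pow_left₀ two_ne_zero (frob_nonneg A) ?_
  rw [frob_mul_orthProj_sq A hs]
  linarith [div_nonneg (sq_nonneg ‖mApp A s‖) (sq_nonneg ‖s‖)]

lemma frob_orthProj_mul_le (A : Mat d) {s : E d} (hs : s ≠ 0) : frob (orthProj s * A) ≤ frob A := by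
  rw [← frob_transpose, transpose_mul, transpose_orthProj, ← frob_transpose A]
  exact frob_mul_orthProj_le Aᵀ hs

/-- `X = ‖A Π‖_F` and `F = ‖A‖_F` satisfy `F² - X² = ‖A s‖² / ‖s‖²` and `F + X ≤ 2δ`. -/
lemma frob_orthProj_mul_mul_orthProj_le (A : Mat d) {s : E d} (hs : s ≠ 0) {δ : ℝ} (hδ : 0 < δ)
    (hAδ : frob A ≤ δ) :
    frob (orthProj s * A * orthProj s) ≤ frob A - ‖mApp A s‖ ^ 2 / (2 * δ * ‖s‖ ^ 2) := by
  set X := frob (A * orthProj s)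
  set e := ‖mApp A s‖ ^ 2 / ‖s‖ ^ 2
  have hX : X ^ 2 = frob A ^ 2 - e := frob_mul_orthProj_sq A hs
  have hXA : X ≤ frob A := frob_mul_orthProj_le A hs
  have hX0 : 0 ≤ X := frob_nonneg _
  have he : ‖mApp A s‖ ^ 2 / (2 * δ * ‖s‖ ^ 2) = e / (2 * δ) := by
    rw [div_div, mul_comm (2 * δ)]
  calc frob (orthProj s * A * orthProj s) ≤ X := by
        rw [mul_assoc]; exact frob_orthProj_mul_le _ hs
    _ ≤ frob A - e / (2 * δ) := by
        rw [le_sub_iff_add_le, ← le_sub_iff_add_le', div_le_iff₀ (by positivity)]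
        nlinarith
    _ = _ := by rw [he]

end Projection

section Update

variable {d : ℕ}

lemma inv_mul_dfpUpdate_mul_inv {P : Mat d} (hP : Pᵀ = P) (hPdet : IsUnit P.det) (B : Mat d)
    (s y : E d) :
    P⁻¹ * dfpUpdate B s y * P⁻¹ = dfpUpdate (P⁻¹ * B * P⁻¹) (mApp P s) (mApp P⁻¹ y) := by
  have hPT : (P⁻¹)ᵀ = P⁻¹ := by rw [transpose_nonsing_inv, hP]
  have hPinv : P⁻¹ * P = 1 := nonsing_inv_mul P hPdet
  have hys : dot (mApp P⁻¹ y) (mApp P s) = dot y s := by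
    rw [dot_mApp_left, hPT, mApp_inv_mApp hPinv]
  have hsy : dot (mApp P s) (mApp P⁻¹ y) = dot s y := by rw [dot_comm, hys, dot_comm]
  have hl : P⁻¹ * (1 - (dot y s)⁻¹ • outer y s)
      = (1 - (dot y s)⁻¹ • outer (mApp P⁻¹ y) (mApp P s)) * P⁻¹ := by
    rw [mul_sub, sub_mul, mul_one, one_mul, mul_smul_comm, smul_mul_assoc, mul_outer, outer_mul,
      hPT, mApp_inv_mApp hPinv]
  have hr : (1 - (dot s y)⁻¹ • outer s y) * P⁻¹
      = P⁻¹ * (1 - (dot s y)⁻¹ • outer (mApp P s) (mApp P⁻¹ y)) := by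
    rw [mul_sub, sub_mul, mul_one, one_mul, mul_smul_comm, smul_mul_assoc, mul_outer, outer_mul,
      hPT, mApp_inv_mApp hPinv]
  have hyy : P⁻¹ * ((dot y s)⁻¹ • outer y y) * P⁻¹
      = (dot y s)⁻¹ • outer (mApp P⁻¹ y) (mApp P⁻¹ y) := by
    rw [mul_smul_comm, smul_mul_assoc, mul_outer, outer_mul, hPT]
  rw [dfpUpdate, dfpUpdate, hys, hsy, mul_add, add_mul, hyy]
  congr 1
  calc P⁻¹ * ((1 - (dot y s)⁻¹ • outer y s) * B * (1 - (dot s y)⁻¹ • outer s y)) * P⁻¹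
      = P⁻¹ * (1 - (dot y s)⁻¹ • outer y s) * B * ((1 - (dot s y)⁻¹ • outer s y) * P⁻¹) := by
        simp only [mul_assoc]
    _ = _ := by rw [hl, hr]; simp only [mul_assoc]

lemma dfpUpdate_sub_one {B : Mat d} (hB : Bᵀ = B) {s y p q : E d} (hs : s ≠ 0)
    (hys : dot y s ≠ 0) (hp : p = (‖s‖ ^ 2)⁻¹ • s) (hq : q = (dot y s)⁻¹ • y) :
    dfpUpdate B s y - 1 = orthProj s * (B - 1) * orthProj s
      + (outer (p - q) (mApp B s) + outer (mApp B s) (p - q)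
        + dot s (mApp B s) • (outer (q - p) q + outer p (q - p))
        + (outer (y - s) q + outer s (q - p))) := by
  -- `1 - y sᵀ / ⟨y, s⟩ = orthProj s + (p - q) sᵀ` and `1 = orthProj s + s pᵀ`; expand.
  have hs2 : ‖s‖ ^ 2 ≠ 0 := by positivity
  subst hp hq
  rw [dfpUpdate, dot_comm s y]
  simp only [orthProj, mul_sub, sub_mul, mul_one, one_mul, smul_mul_assoc, mul_smul_comm, mul_outer,
    outer_mul, hB, mApp_outer, outer_smul_left, outer_smul_right, dot_self]
  ext i j
  simp only [Matrix.add_apply, Matrix.sub_apply, Matrix.smul_apply, outer, of_apply,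
    Matrix.one_apply, smul_eq_mul, PiLp.sub_apply, PiLp.smul_apply, dot_comm (mApp B s) s]
  split_ifs <;> field_simp <;> ring

end Update

section Secant

variable {d : ℕ} {s y : E d} {τ : ℝ}

lemma norm_sub_smul_le (u s : E d) : ‖u - (dot u s / ‖s‖ ^ 2) • s‖ ≤ ‖u‖ := by
  refine le_of_pow_le_pow_left₀ two_ne_zero (norm_nonneg u) ?_
  rcases eq_or_ne s 0 with rfl | hs
  · simp
  have hs2 : ‖s‖ ^ 2 ≠ 0 := by positivity
  rw [norm_sub_sq_real, real_inner_smul_right, norm_smul, mul_pow, Real.norm_eq_abs, sq_abs,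
    ← dot_eq_inner]
  have : dot u s / ‖s‖ ^ 2 * dot u s = (dot u s / ‖s‖ ^ 2) ^ 2 * ‖s‖ ^ 2 := by
    field_simp
  nlinarith [sq_nonneg (dot u s / ‖s‖ ^ 2), sq_nonneg ‖s‖]

lemma mul_norm_sq_le_dot (hys : ‖y - s‖ ≤ τ * ‖s‖) : (1 - τ) * ‖s‖ ^ 2 ≤ dot y s := by
  have h : dot y s = dot (y - s) s + ‖s‖ ^ 2 := by rw [dot_sub_left, dot_self]; ring
  have := neg_abs_le (dot (y - s) s)
  nlinarith [abs_dot_le (y - s) s, norm_nonneg s]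

lemma dot_pos_of_norm_sub_le (hs : s ≠ 0) (hτ : τ < 1) (hys : ‖y - s‖ ≤ τ * ‖s‖) : 0 < dot y s :=
  lt_of_lt_of_le (mul_pos (by linarith) (by positivity)) (mul_norm_sq_le_dot hys)

lemma norm_inv_dot_smul_le (hs : s ≠ 0) (hτ : τ < 1) (hys : ‖y - s‖ ≤ τ * ‖s‖) :
    ‖(dot y s)⁻¹ • y‖ ≤ (1 + τ) / ((1 - τ) * ‖s‖) := by
  have hc := dot_pos_of_norm_sub_le hs hτ hys
  have hm : 0 < ‖s‖ := norm_pos_iff.mpr hs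
  have hy : ‖y‖ ≤ (1 + τ) * ‖s‖ := by
    linarith [norm_le_norm_add_norm_sub' y s]
  rw [norm_smul, norm_inv, Real.norm_of_nonneg hc.le, inv_mul_le_iff₀ hc, mul_div_assoc',
    le_div_iff₀ (by nlinarith)]
  nlinarith [mul_norm_sq_le_dot hys, norm_nonneg y]

lemma norm_sub_inv_dot_smul_le (hs : s ≠ 0) (hτ : τ < 1) (hys : ‖y - s‖ ≤ τ * ‖s‖) :
    ‖(‖s‖ ^ 2)⁻¹ • s - (dot y s)⁻¹ • y‖ ≤ τ / ((1 - τ) * ‖s‖) := by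
  have hc := dot_pos_of_norm_sub_le hs hτ hys
  have hm : 0 < ‖s‖ := norm_pos_iff.mpr hs
  have h : (‖s‖ ^ 2)⁻¹ • s - (dot y s)⁻¹ • y
      = -((dot y s)⁻¹ • ((y - s) - (dot (y - s) s / ‖s‖ ^ 2) • s)) := by
    rw [dot_sub_left, dot_self]
    match_scalars
    · field_simp; ring
    · field_simp
  rw [h, norm_neg, norm_smul, norm_inv, Real.norm_of_nonneg hc.le, inv_mul_le_iff₀ hc,
    mul_div_assoc', le_div_iff₀ (by nlinarith)]
  have hτ0 : 0 ≤ τ := nonneg_of_mul_nonneg_left ((norm_nonneg _).trans hys) hm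
  have hβ : 0 ≤ (1 - τ) * ‖s‖ := mul_nonneg (by linarith) hm.le
  nlinarith [mul_le_mul_of_nonneg_right ((norm_sub_smul_le (y - s) s).trans hys) hβ,
    mul_le_mul_of_nonneg_left (mul_norm_sq_le_dot hys) hτ0]

end Secant

section Potential

variable {d : ℕ}

lemma frob_outer_sub_add_outer_sub_le (p q : E d) :
    frob (outer (q - p) q + outer p (q - p)) ≤ ‖p - q‖ * (‖q‖ + ‖p‖) := by
  refine (frob_add_le _ _).trans (le_of_eq ?_)
  rw [frob_outer, frob_outer, norm_sub_rev]; ring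

lemma frob_curvature_term_le (B : Mat d) {s p q : E d} (hs : s ≠ 0) {τ : ℝ} (hτ0 : 0 ≤ τ)
    (hτ : τ < 1) (hpq : ‖p - q‖ ≤ τ / ((1 - τ) * ‖s‖))
    (hq : ‖q‖ ≤ (1 + τ) / ((1 - τ) * ‖s‖)) (hp : ‖p‖ = 1 / ‖s‖) :
    frob (dot s (mApp B s) • (outer (q - p) q + outer p (q - p)))
      ≤ 2 * spec B * τ / (1 - τ) ^ 2 := by
  have hm : 0 < ‖s‖ := norm_pos_iff.mpr hs
  have hβ : 0 < 1 - τ := by linarith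
  have hsBs : |dot s (mApp B s)| ≤ spec B * ‖s‖ ^ 2 := by
    nlinarith [abs_dot_le s (mApp B s), norm_mApp_le_spec B s, norm_nonneg s]
  have hpqq : frob (outer (q - p) q + outer p (q - p))
      ≤ τ / ((1 - τ) * ‖s‖) * ((1 + τ) / ((1 - τ) * ‖s‖) + 1 / ‖s‖) := by
    refine (frob_outer_sub_add_outer_sub_le p q).trans ?_
    rw [hp]
    exact mul_le_mul hpq (add_le_add_left hq _) (by positivity) (by positivity)
  rw [frob_smul]
  calc |dot s (mApp B s)| * frob (outer (q - p) q + outer p (q - p))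
      ≤ spec B * ‖s‖ ^ 2 * (τ / ((1 - τ) * ‖s‖) * ((1 + τ) / ((1 - τ) * ‖s‖) + 1 / ‖s‖)) :=
        mul_le_mul hsBs hpqq (frob_nonneg _) (mul_nonneg (spec_nonneg B) (sq_nonneg _))
    _ = 2 * spec B * τ / (1 - τ) ^ 2 := by field_simp; ring

lemma frob_dfp_remainder_le (B : Mat d) {s y p q : E d} (hs : s ≠ 0) {τ : ℝ} (hτ : τ < 1)
    (hys : ‖y - s‖ ≤ τ * ‖s‖) (hpq : ‖p - q‖ ≤ τ / ((1 - τ) * ‖s‖))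
    (hq : ‖q‖ ≤ (1 + τ) / ((1 - τ) * ‖s‖)) (hp : ‖p‖ = 1 / ‖s‖) :
    frob (outer (p - q) (mApp B s) + outer (mApp B s) (p - q)
      + dot s (mApp B s) • (outer (q - p) q + outer p (q - p))
      + (outer (y - s) q + outer s (q - p)))
      ≤ 2 * (spec B * τ / (1 - τ)) + 2 * spec B * τ / (1 - τ) ^ 2 + τ * (2 + τ) / (1 - τ) := by
  have hm : 0 < ‖s‖ := norm_pos_iff.mpr hs
  have hτ0 : 0 ≤ τ := nonneg_of_mul_nonneg_left ((norm_nonneg _).trans hys) hm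
  have hβ : 0 < 1 - τ := by linarith
  have hpq0 : 0 ≤ τ / ((1 - τ) * ‖s‖) := by positivity
  set Bs := mApp B s
  have hBs : ‖Bs‖ ≤ spec B * ‖s‖ := norm_mApp_le_spec B s
  have hrank1 : frob (outer (p - q) Bs) ≤ spec B * τ / (1 - τ) := by
    rw [frob_outer]
    calc ‖p - q‖ * ‖Bs‖ ≤ τ / ((1 - τ) * ‖s‖) * (spec B * ‖s‖) :=
          mul_le_mul hpq hBs (norm_nonneg _) hpq0
      _ = spec B * τ / (1 - τ) := by field_simp
  have hrank1' : frob (outer Bs (p - q)) ≤ spec B * τ / (1 - τ) := by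
    rwa [← frob_transpose, transpose_outer]
  have hcurv := frob_curvature_term_le B hs hτ0 hτ hpq hq hp
  have hsec : frob (outer (y - s) q + outer s (q - p)) ≤ τ * (2 + τ) / (1 - τ) := by
    refine (frob_add_le _ _).trans ?_
    rw [frob_outer, frob_outer, norm_sub_rev q p]
    calc ‖y - s‖ * ‖q‖ + ‖s‖ * ‖p - q‖
        ≤ τ * ‖s‖ * ((1 + τ) / ((1 - τ) * ‖s‖)) + ‖s‖ * (τ / ((1 - τ) * ‖s‖)) := by gcongr
      _ = τ * (2 + τ) / (1 - τ) := by field_simp; ring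
  have := frob_add_le (outer (p - q) Bs) (outer Bs (p - q))
  have := frob_add_le (outer (p - q) Bs + outer Bs (p - q))
    (dot s Bs • (outer (q - p) q + outer p (q - p)))
  linarith [frob_add_le (outer (p - q) Bs + outer Bs (p - q)
    + dot s Bs • (outer (q - p) q + outer p (q - p))) (outer (y - s) q + outer s (q - p))]

lemma dfp_error_budget {a τ : ℝ} (ha : 0 ≤ a) (hτ0 : 0 ≤ τ) (hτ1 : τ < 1) :
    2 * (a * τ / (1 - τ)) + 2 * a * τ / (1 - τ) ^ 2 + τ * (2 + τ) / (1 - τ)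
      ≤ (a * (4 / (1 - τ)) + a * (4 * τ / (1 - τ) ^ 2) + (3 + τ) / (1 - τ)) * τ := by
  have hβ : 0 < 1 - τ := by linarith
  field_simp
  nlinarith [mul_nonneg (mul_nonneg ha hτ0) hτ0, mul_nonneg hτ0 hβ.le]

theorem frob_dfpUpdate_sub_one_le {B : Mat d} (hB : Bᵀ = B) {s y : E d} (hs : s ≠ 0) {τ δ : ℝ}
    (hτ : τ < 1) (hys : ‖y - s‖ ≤ τ * ‖s‖) (hδ : 0 < δ) (hBδ : frob (B - 1) ≤ δ) :
    frob (dfpUpdate B s y - 1) ≤ frob (B - 1) - ‖mApp (B - 1) s‖ ^ 2 / (2 * δ * ‖s‖ ^ 2)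
      + (spec B * (4 / (1 - τ)) + spec B * (4 * τ / (1 - τ) ^ 2) + (3 + τ) / (1 - τ)) * τ := by
  have hτ0 : 0 ≤ τ :=
    nonneg_of_mul_nonneg_left ((norm_nonneg _).trans hys) (norm_pos_iff.mpr hs)
  have hp : ‖(‖s‖ ^ 2)⁻¹ • s‖ = 1 / ‖s‖ := by
    rw [norm_smul, norm_inv, norm_pow, norm_norm]; field_simp
  rw [dfpUpdate_sub_one hB hs (dot_pos_of_norm_sub_le hs hτ hys).ne' rfl rfl]
  refine (frob_add_le _ _).trans ?_
  linarith [frob_dfp_remainder_le B hs hτ hys (norm_sub_inv_dot_smul_le hs hτ hys)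
      (norm_inv_dot_smul_le hs hτ hys) hp,
    frob_orthProj_mul_mul_orthProj_le (B - 1) hs hδ hBδ, dfp_error_budget (spec_nonneg B) hτ0 hτ]

end Potential

section Hessian

variable {d : ℕ}

lemma norm_le_norm_mApp_div_sqrt {P : Mat d} (hP : Pᵀ = P) {μ : ℝ} (hμ : 0 < μ)
    (hH : ∀ v, μ * ‖v‖ ^ 2 ≤ dot v (mApp (P * P) v)) (v : E d) :
    ‖v‖ ≤ ‖mApp P v‖ / √μ := by
  have h : μ * ‖v‖ ^ 2 ≤ ‖mApp P v‖ ^ 2 := by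
    rw [← dot_self (mApp P v), dot_mApp_left, hP, ← mApp_mul]; exact hH v
  rw [le_div_iff₀ (Real.sqrt_pos.mpr hμ), mul_comm]
  refine le_of_pow_le_pow_left₀ two_ne_zero (norm_nonneg _) ?_
  rwa [mul_pow, Real.sq_sqrt hμ.le]

lemma norm_sub_sub_mApp_le {g : E d → E d} {Hess : E d → Mat d}
    (hHd : ∀ x, HasFDerivAt g (toEuclideanCLM (𝕜 := ℝ) (Hess x)) x) {x₀ a b : E d} {M R : ℝ}
    (hLip : ∀ x, spec (Hess x - Hess x₀) ≤ M * ‖x - x₀‖) (hM : 0 ≤ M)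
    (ha : ‖a - x₀‖ ≤ R) (hb : ‖b - x₀‖ ≤ R) :
    ‖g b - g a - mApp (Hess x₀) (b - a)‖ ≤ M * R * ‖b - a‖ := by
  refine (convex_closedBall x₀ R).norm_image_sub_le_of_norm_hasFDerivWithin_le'
    (fun x _ => (hHd x).hasFDerivWithinAt) (fun x hx => ?_)
    (mem_closedBall_iff_norm.mpr ha) (mem_closedBall_iff_norm.mpr hb)
  rw [← map_sub]
  exact (hLip x).trans (mul_le_mul_of_nonneg_left (mem_closedBall_iff_norm.mp hx) hM)

lemma tauP_eq {M μ : ℝ} (hM : 0 ≤ M) (hμ : 0 ≤ μ) (P : Mat d) (xs x x' : E d) :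
    tauP M μ P xs x x' = M / √μ ^ 3 * max ‖mApp P (x - xs)‖ ‖mApp P (x' - xs)‖ := by
  have h32 : μ ^ ((3 : ℝ) / 2) = √μ ^ 3 := by
    rw [Real.sqrt_eq_rpow, ← Real.rpow_natCast, ← Real.rpow_mul hμ]; norm_num
  rw [tauP, sig, sig, h32, mul_max_of_nonneg _ _ (by positivity)]

lemma norm_scaled_secant_sub_le {g : E d → E d} {Hess : E d → Mat d} {xs : E d} {μ M : ℝ}
    (hμ : 0 < μ) (hM : 0 ≤ M) (hHd : ∀ x, HasFDerivAt g (toEuclideanCLM (𝕜 := ℝ) (Hess x)) x)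
    (hHl : ∀ v, μ * ‖v‖ ^ 2 ≤ dot v (mApp (Hess xs) v))
    (hLip : ∀ x, spec (Hess x - Hess xs) ≤ M * ‖x - xs‖)
    {P : Mat d} (hP : Pᵀ = P) (hPdet : IsUnit P.det) (hPP : P * P = Hess xs) (x x' : E d) :
    ‖mApp P⁻¹ (g x' - g x) - mApp P (x' - x)‖ ≤ tauP M μ P xs x x' * ‖mApp P (x' - x)‖ := by
  have hnorm := norm_le_norm_mApp_div_sqrt hP hμ (hPP ▸ hHl)
  have hPP' : P * P⁻¹ = 1 := mul_nonsing_inv P hPdet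
  set R := max ‖mApp P (x - xs)‖ ‖mApp P (x' - xs)‖
  have hmvt := norm_sub_sub_mApp_le (R := R / √μ) hHd hLip hM
    ((hnorm _).trans (by gcongr; exact le_max_left _ _))
    ((hnorm _).trans (by gcongr; exact le_max_right _ _))
  have he : mApp P⁻¹ (g x' - g x) - mApp P (x' - x)
      = mApp P⁻¹ (g x' - g x - mApp (Hess xs) (x' - x)) := by
    rw [← hPP, mApp_mul]
    simp only [mApp_sub, mApp_inv_mApp (nonsing_inv_mul P hPdet)]
  calc ‖mApp P⁻¹ (g x' - g x) - mApp P (x' - x)‖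
      ≤ ‖g x' - g x - mApp (Hess xs) (x' - x)‖ / √μ := by
        have := hnorm (mApp P⁻¹ (g x' - g x - mApp (Hess xs) (x' - x)))
        rwa [← mApp_mul, hPP', mApp_one, ← he] at this
    _ ≤ M * (R / √μ) * (‖mApp P (x' - x)‖ / √μ) / √μ := by
        gcongr
        exact hmvt.trans (by gcongr; exact hnorm _)
    _ = tauP M μ P xs x x' * ‖mApp P (x' - x)‖ := by
        rw [tauP_eq hM hμ.le]; ring

end Hessian

theorem dfp_potential_decrease_general
    {d : ℕ}
    (g : E d → E d) (Hess : E d → Mat d) (xs : E d)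
    (μ M : ℝ) (hμ : 0 < μ) (hM : 0 < M)
    -- `g` is the gradient of `f`, and `Hess` its Hessian (so `f` is twice differentiable)
    (hHd : ∀ x, HasFDerivAt g (Matrix.toEuclideanCLM (𝕜 := ℝ) (Hess x)) x)
    -- Assumption 1: strong convexity and gradient Lipschitz continuity
    (hHl : ∀ x v, μ * ‖v‖ ^ 2 ≤ dot v (mApp (Hess x) v))
    -- Assumption 2: Hessian Lipschitz continuity toward the optimum
    (hLip : ∀ x, spec (Hess x - Hess xs) ≤ M * ‖x - xs‖)
    -- `sqH` is the positive definite square root `H_*^{1/2}` of `H_* = ∇²f(x_*)`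
    (sqH : Mat d) (hsqH : sqH.PosDef) (hsqH2 : sqH * sqH = Hess xs)
    (δ : ℝ) (hδ : 0 < δ)
    -- one step of the DFP method: current iterate `xk`, Hessian approximation `Bk`
    (xk xk1 : E d) (Bk : Mat d) (hBkpd : Bk.PosDef)
    (hs : xk1 - xk ≠ 0)
    (hτ : tauP M μ sqH xs xk xk1 < 1)
    (hB : frob (sqH⁻¹ * Bk * sqH⁻¹ - 1) ≤ δ) :
    frob (sqH⁻¹ * dfpUpdate Bk (xk1 - xk) (g xk1 - g xk) * sqH⁻¹ - 1) ≤
      frob (sqH⁻¹ * Bk * sqH⁻¹ - 1)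
        - ‖mApp (sqH⁻¹ * Bk * sqH⁻¹ - 1) (mApp sqH (xk1 - xk))‖ ^ 2
            / (2 * δ * ‖mApp sqH (xk1 - xk)‖ ^ 2)
        + (spec (sqH⁻¹ * Bk * sqH⁻¹) * (4 / (1 - tauP M μ sqH xs xk xk1))
            + spec (sqH⁻¹ * Bk * sqH⁻¹) *
                (4 * tauP M μ sqH xs xk xk1 / (1 - tauP M μ sqH xs xk xk1) ^ 2)
            + (3 + tauP M μ sqH xs xk xk1) / (1 - tauP M μ sqH xs xk xk1))
          * tauP M μ sqH xs xk xk1 := by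
  have hdet : IsUnit sqH.det := (isUnit_iff_isUnit_det sqH).mp hsqH.isUnit
  have hP : sqHᵀ = sqH := (isHermitian_iff_isSymm.mp hsqH.isHermitian).eq
  have hBk : Bkᵀ = Bk := (isHermitian_iff_isSymm.mp hBkpd.isHermitian).eq
  have hA : (sqH⁻¹ * Bk * sqH⁻¹)ᵀ = sqH⁻¹ * Bk * sqH⁻¹ := by
    rw [transpose_mul, transpose_mul, transpose_nonsing_inv, hP, hBk, mul_assoc]
  have hsh : mApp sqH (xk1 - xk) ≠ 0 := fun h => hs <| by
    rw [← mApp_inv_mApp (nonsing_inv_mul sqH hdet) (xk1 - xk), h, mApp, map_zero]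
  have hsec := norm_scaled_secant_sub_le hμ hM.le hHd (hHl xs) hLip hP hdet hsqH2 xk xk1
  rw [inv_mul_dfpUpdate_mul_inv hP hdet]
  exact frob_dfpUpdate_sub_one_le hA hsh hτ hsec hδ hB

theorem dfp_potential_decrease
    {d : ℕ}
    (f : E d → ℝ) (g : E d → E d) (Hess : E d → Mat d) (xs : E d)
    (μ L M : ℝ) (hμ : 0 < μ) (hμL : μ ≤ L) (hM : 0 < M)
    -- `g` is the gradient of `f`, and `Hess` its Hessian (so `f` is twice differentiable)
    (hg : ∀ x, HasGradientAt f (g x) x)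
    (hHd : ∀ x, HasFDerivAt g (Matrix.toEuclideanCLM (𝕜 := ℝ) (Hess x)) x)
    -- `xs` is the unique minimizer of `f`
    (hmin : ∀ x, f xs ≤ f x)
    (huniq : ∀ x, (∀ y, f x ≤ f y) → x = xs)
    -- Assumption 1: strong convexity and gradient Lipschitz continuity
    (hgl : ∀ x y, μ * ‖x - y‖ ≤ ‖g x - g y‖)
    (hgu : ∀ x y, ‖g x - g y‖ ≤ L * ‖x - y‖)
    (hHl : ∀ x v, μ * ‖v‖ ^ 2 ≤ dot v (mApp (Hess x) v))
    (hHu : ∀ x v, dot v (mApp (Hess x) v) ≤ L * ‖v‖ ^ 2)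
    -- Assumption 2: Hessian Lipschitz continuity toward the optimum
    (hLip : ∀ x, spec (Hess x - Hess xs) ≤ M * ‖x - xs‖)
    -- `sqH` is the positive definite square root `H_*^{1/2}` of `H_* = ∇²f(x_*)`
    (sqH : Mat d) (hsqH : sqH.PosDef) (hsqH2 : sqH * sqH = Hess xs)
    (δ : ℝ) (hδ : 0 < δ)
    -- one step of the DFP method: current iterate `xk`, Hessian approximation `Bk`
    (xk xk1 : E d) (Bk : Mat d) (hBkpd : Bk.PosDef)
    (hxk1 : xk1 = xk - mApp Bk⁻¹ (g xk))
    (hs : xk1 - xk ≠ 0)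
    (hτ : tauP M μ sqH xs xk xk1 < 1)
    (hB : frob (sqH⁻¹ * Bk * sqH⁻¹ - 1) ≤ δ) :
    frob (sqH⁻¹ * dfpUpdate Bk (xk1 - xk) (g xk1 - g xk) * sqH⁻¹ - 1) ≤
      frob (sqH⁻¹ * Bk * sqH⁻¹ - 1)
        - ‖mApp (sqH⁻¹ * Bk * sqH⁻¹ - 1) (mApp sqH (xk1 - xk))‖ ^ 2
            / (2 * δ * ‖mApp sqH (xk1 - xk)‖ ^ 2)
        + (spec (sqH⁻¹ * Bk * sqH⁻¹) * (4 / (1 - tauP M μ sqH xs xk xk1))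
            + spec (sqH⁻¹ * Bk * sqH⁻¹) *
                (4 * tauP M μ sqH xs xk xk1 / (1 - tauP M μ sqH xs xk xk1) ^ 2)
            + (3 + tauP M μ sqH xs xk xk1) / (1 - tauP M μ sqH xs xk xk1))
          * tauP M μ sqH xs xk xk1 :=
  dfp_potential_decrease_general g Hess xs μ M hμ hM hHd hHl hLip sqH hsqH hsqH2 δ hδ xk xk1 Bk
    hBkpd hs hτ hB
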